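/- arXiv:math/0602367 — 5 statements merged into one kernel-verified Lean document; each statement's English description precedes it below -/
import Mathlib

section
/- For every odd prime number p such that the Legendre symbol (p/7) equals 1, there exist positive integers x and y with p = x² + 7·y². -/
instance : Fact (Nat.Prime 7) := ⟨by norm_num⟩

open ZMod in
lemma isSquare_neg_seven' (p : ℕ) [Fact p.Prime] (hodd : Odd p) (hp7 : p ≠ 7)
    (hleg : legendreSym 7 p = 1) : IsSquare (-7 : ZMod p) := by
  have hp2 : p ≠ 2 := by rintro rfl; exact (by decide : ¬ Odd 2) hodd
  have h1 : legendreSym p 7 = (-1 : ℤ) ^ (7 / 2 * (p / 2)) * legendreSym 7 p :=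
    legendreSym.quadratic_reciprocity' (by norm_num) hp2
  have h2 : legendreSym p (-1) = χ₄ p := legendreSym.at_neg_one hp2
  have hmod : p % 2 = 1 := Nat.odd_iff.mp hodd
  have h3 : (χ₄ p : ℤ) = (-1) ^ (p / 2) := ZMod.χ₄_eq_neg_one_pow hmod
  have h4 : legendreSym p (-7) = legendreSym p (-1) * legendreSym p 7 := by
    rw [show (-7 : ℤ) = -1 * 7 by norm_num, legendreSym.mul]
  have h5 : legendreSym p (-7) = 1 := by
    rw [h4, h2, h3, h1, hleg, mul_one, ← pow_add]
    have : p / 2 + 7 / 2 * (p / 2) = 2 * (2 * (p/2)) := by omega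
    rw [this, pow_mul]
    norm_num
  have hne : ((-7 : ℤ) : ZMod p) ≠ 0 := by
    rw [Ne, ZMod.intCast_zmod_eq_zero_iff_dvd]
    intro h
    have h7 : (p : ℤ) ∣ 7 := Int.dvd_neg.mp h
    have : p ∣ 7 := Int.ofNat_dvd.mp (by exact_mod_cast h7)
    exact hp7 ((Nat.prime_dvd_prime_iff_eq Fact.out (by norm_num)).mp this)
  have := (legendreSym.eq_one_iff p hne).mp h5
  simpa using this

lemma thue_seven (p : ℕ) [hpf : Fact p.Prime] (hs : IsSquare (-7 : ZMod p)) :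
    ∃ a b k : ℤ, 1 ≤ k ∧ k ≤ 7 ∧ a ^ 2 + 7 * b ^ 2 = k * p := by
  obtain ⟨z, hz⟩ := hs
  obtain ⟨m, hm⟩ : ∃ m, m = Nat.sqrt p := ⟨_, rfl⟩
  have hmlt : m ^ 2 < p := by
    have h1 : m ^ 2 ≤ p := hm ▸ Nat.sqrt_le' p
    rcases Nat.lt_or_ge (m ^ 2) p with h | h
    · exact h
    · exfalso
      have heq : m ^ 2 = p := le_antisymm h1 h
      have hd : m ∣ p := ⟨m, by rw [← heq]; ring⟩
      have h2 := hpf.out.two_le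
      rcases hpf.out.eq_one_or_self_of_dvd m hd with h3 | h3
      · rw [h3] at heq; omega
      · rw [h3] at heq
        have hpp : p ^ 2 = p * p := sq p
        have hge : 2 * p ≤ p * p := Nat.mul_le_mul_right p h2
        omega
  have hcard : Fintype.card (ZMod p) < Fintype.card (Fin (m+1) × Fin (m+1)) := by
    rw [ZMod.card, Fintype.card_prod, Fintype.card_fin]
    have h1 : p < (m + 1) ^ 2 := hm ▸ Nat.lt_succ_sqrt' p
    have h2 : (m + 1) ^ 2 = (m + 1) * (m + 1) := sq (m+1)
    omega
  obtain ⟨v, w, hvw, hfeq⟩ := Fintype.exists_ne_map_eq_of_card_lt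
    (fun v : Fin (m+1) × Fin (m+1) => ((v.1 : ℕ) : ZMod p) + z * ((v.2 : ℕ) : ZMod p)) hcard
  set a : ℤ := (v.1 : ℕ) - (w.1 : ℕ) with ha
  set b : ℤ := (v.2 : ℕ) - (w.2 : ℕ) with hb
  have key : ((a ^ 2 + 7 * b ^ 2 : ℤ) : ZMod p) = 0 := by
    have h1 : ((a : ℤ) : ZMod p) + z * ((b : ℤ) : ZMod p) = 0 := by
      push_cast [ha, hb]
      linear_combination hfeq
    push_cast
    linear_combination (((a : ℤ) : ZMod p) - z * ((b : ℤ) : ZMod p)) * h1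
      - ((b : ℤ) : ZMod p) ^ 2 * hz
  have hdvd : (p : ℤ) ∣ a ^ 2 + 7 * b ^ 2 := (ZMod.intCast_zmod_eq_zero_iff_dvd _ p).mp key
  have hv1 : (v.1 : ℕ) ≤ m := Nat.lt_succ_iff.mp v.1.isLt
  have hw1 : (w.1 : ℕ) ≤ m := Nat.lt_succ_iff.mp w.1.isLt
  have hv2 : (v.2 : ℕ) ≤ m := Nat.lt_succ_iff.mp v.2.isLt
  have hw2 : (w.2 : ℕ) ≤ m := Nat.lt_succ_iff.mp w.2.isLt
  have hab : a ^ 2 ≤ ((m : ℤ)) ^ 2 := by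
    apply sq_le_sq'
    · rw [ha]; push_cast; omega
    · rw [ha]; push_cast; omega
  have hbb : b ^ 2 ≤ ((m : ℤ)) ^ 2 := by
    apply sq_le_sq'
    · rw [hb]; push_cast; omega
    · rw [hb]; push_cast; omega
  have hmz : ((m : ℤ)) ^ 2 < (p : ℤ) := by exact_mod_cast hmlt
  have hlt : a ^ 2 + 7 * b ^ 2 < 8 * p := by linarith
  have hab0 : a ≠ 0 ∨ b ≠ 0 := by
    by_contra h
    push_neg at h
    apply hvw
    have e1 : (v.1 : ℕ) = (w.1 : ℕ) := by have := h.1; rw [ha] at this; omega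
    have e2 : (v.2 : ℕ) = (w.2 : ℕ) := by have := h.2; rw [hb] at this; omega
    exact Prod.ext (Fin.ext e1) (Fin.ext e2)
  have hpos : 0 < a ^ 2 + 7 * b ^ 2 := by
    rcases hab0 with h | h
    · have : 0 < a ^ 2 := by positivity
      have := sq_nonneg b
      linarith
    · have : 0 < b ^ 2 := by positivity
      have := sq_nonneg a
      linarith
  obtain ⟨k, hk⟩ := hdvd
  have hppos : (0:ℤ) < p := by exact_mod_cast hpf.out.pos
  refine ⟨a, b, k, ?_, ?_, by rw [hk]; ring⟩
  · nlinarith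
  · nlinarith

lemma sq_mod2' (a : ℤ) : (∃ t, a = 2 * t ∧ a ^ 2 = 4 * t ^ 2) ∨ (∃ t, a ^ 2 = 8 * t + 1) := by
  rcases Int.even_or_odd a with ⟨t, ht⟩ | ⟨t, ht⟩
  · exact Or.inl ⟨t, by omega, by rw [show a = 2*t by omega]; ring⟩
  · right
    rcases Int.even_or_odd t with ⟨s, hs⟩ | ⟨s, hs⟩
    · exact ⟨2*s^2 + s, by rw [ht, hs]; ring⟩
    · exact ⟨2*s^2 + 3*s + 1, by rw [ht, hs]; ring⟩

lemma sq_mod3' (a : ℤ) : (∃ t, a = 3 * t ∧ a ^ 2 = 9 * t ^ 2) ∨ (∃ t, a ^ 2 = 3 * t + 1) := by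
  have h := Int.mul_ediv_add_emod a 3
  have h1 : 0 ≤ a % 3 := Int.emod_nonneg a (by norm_num)
  have h2 : a % 3 < 3 := Int.emod_lt_of_pos a (by norm_num)
  set q := a / 3
  interval_cases h : a % 3
  · exact Or.inl ⟨q, by omega, by rw [show a = 3*q by omega]; ring⟩
  · exact Or.inr ⟨3*q^2 + 2*q, by rw [show a = 3*q+1 by omega]; ring⟩
  · exact Or.inr ⟨3*q^2 + 4*q + 1, by rw [show a = 3*q+2 by omega]; ring⟩

lemma sq_mod5' (a : ℤ) :
    (∃ t, a = 5 * t ∧ a ^ 2 = 25 * t ^ 2) ∨ (∃ t, a ^ 2 = 5 * t + 1) ∨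
      (∃ t, a ^ 2 = 5 * t + 4) := by
  have h := Int.mul_ediv_add_emod a 5
  have h1 : 0 ≤ a % 5 := Int.emod_nonneg a (by norm_num)
  have h2 : a % 5 < 5 := Int.emod_lt_of_pos a (by norm_num)
  set q := a / 5
  interval_cases h : a % 5
  · exact Or.inl ⟨q, by omega, by rw [show a = 5*q by omega]; ring⟩
  · exact Or.inr <| Or.inl ⟨5*q^2 + 2*q, by rw [show a = 5*q+1 by omega]; ring⟩
  · exact Or.inr <| Or.inr ⟨5*q^2 + 4*q, by rw [show a = 5*q+2 by omega]; ring⟩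
  · exact Or.inr <| Or.inr ⟨5*q^2 + 6*q + 1, by rw [show a = 5*q+3 by omega]; ring⟩
  · exact Or.inr <| Or.inl ⟨5*q^2 + 8*q + 3, by rw [show a = 5*q+4 by omega]; ring⟩

lemma descent_seven (p : ℕ) (hp : p.Prime) (hodd : Odd p) (hp3 : p ≠ 3) (hp5 : p ≠ 5)
    (a b k : ℤ) (hk1 : 1 ≤ k) (hk7 : k ≤ 7) (heq : a ^ 2 + 7 * b ^ 2 = k * p) :
    ∃ u v : ℤ, (p : ℤ) = u ^ 2 + 7 * v ^ 2 := by
  have hoddp : p % 2 = 1 := Nat.odd_iff.mp hodd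
  have hnd3 : ¬ (3 ∣ p) := fun h =>
    hp3 ((Nat.prime_dvd_prime_iff_eq (by norm_num) hp).mp h).symm
  have hnd5 : ¬ (5 ∣ p) := fun h =>
    hp5 ((Nat.prime_dvd_prime_iff_eq (by norm_num) hp).mp h).symm
  interval_cases k
  · exact ⟨a, b, by linarith⟩
  · exfalso
    rcases sq_mod2' a with ⟨s, hs, hs2⟩ | ⟨s, hs2⟩ <;>
      rcases sq_mod2' b with ⟨t, ht, ht2⟩ | ⟨t, ht2⟩ <;> omega
  · exfalso
    rcases sq_mod3' a with ⟨s, hs, hs2⟩ | ⟨s, hs2⟩ <;>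
      rcases sq_mod3' b with ⟨t, ht, ht2⟩ | ⟨t, ht2⟩ <;> omega
  · rcases sq_mod2' a with ⟨s, hs, hs2⟩ | ⟨s, hs2⟩ <;>
      rcases sq_mod2' b with ⟨t, ht, ht2⟩ | ⟨t, ht2⟩
    · exact ⟨s, t, by omega⟩
    all_goals (exfalso; omega)
  · exfalso
    rcases sq_mod5' a with ⟨s, hs, hs2⟩ | ⟨s, hs2⟩ | ⟨s, hs2⟩ <;>
      rcases sq_mod5' b with ⟨t, ht, ht2⟩ | ⟨t, ht2⟩ | ⟨t, ht2⟩ <;> omega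
  · exfalso
    rcases sq_mod2' a with ⟨s, hs, hs2⟩ | ⟨s, hs2⟩ <;>
      rcases sq_mod2' b with ⟨t, ht, ht2⟩ | ⟨t, ht2⟩ <;> omega
  · have h7 : (7:ℤ) ∣ a ^ 2 := ⟨(p : ℤ) - b ^ 2, by linarith⟩
    have hpr : Prime (7:ℤ) := by norm_num
    obtain ⟨c, hc⟩ := hpr.dvd_of_dvd_pow h7
    have hc2 : a ^ 2 = 49 * c ^ 2 := by rw [hc]; ring
    exact ⟨b, c, by omega⟩

/-- For every odd prime `p` with Legendre symbol `(p/7) = 1`, there exist positive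
integers `x`, `y` with `p = x² + 7y²`. -/
theorem prime_eq_sq_add_seven_mul_sq (p : ℕ) (hp : p.Prime) (hodd : Odd p)
    (hleg : legendreSym 7 p = 1) :
    ∃ x y : ℕ, 0 < x ∧ 0 < y ∧ p = x ^ 2 + 7 * y ^ 2 := by
  haveI : Fact p.Prime := ⟨hp⟩
  have hp7 : p ≠ 7 := by
    rintro rfl
    have h0 : legendreSym 7 ((7:ℕ) : ℤ) = 0 :=
      (legendreSym.eq_zero_iff 7 _).mpr (by push_cast; exact ZMod.natCast_self 7)
    rw [h0] at hleg
    norm_num at hleg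
  have hp3 : p ≠ 3 := by rintro rfl; revert hleg; decide
  have hp5 : p ≠ 5 := by rintro rfl; revert hleg; decide
  have hs := isSquare_neg_seven' p hodd hp7 hleg
  obtain ⟨a, b, k, hk1, hk7, heq⟩ := thue_seven p hs
  obtain ⟨u, v, huv⟩ := descent_seven p hp hodd hp3 hp5 a b k hk1 hk7 heq
  refine ⟨u.natAbs, v.natAbs, ?_, ?_, ?_⟩
  · rcases Nat.eq_zero_or_pos u.natAbs with h | h
    swap
    · exact h
    · exfalso
      have hu : u = 0 := Int.natAbs_eq_zero.mp h
      rw [hu] at huv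
      have : (7:ℤ) ∣ (p:ℤ) := ⟨v^2, by linarith⟩
      have : (7:ℕ) ∣ p := by exact_mod_cast this
      exact hp7 ((Nat.prime_dvd_prime_iff_eq (by norm_num) hp).mp this).symm
  · rcases Nat.eq_zero_or_pos v.natAbs with h | h
    swap
    · exact h
    · exfalso
      have hv : v = 0 := Int.natAbs_eq_zero.mp h
      rw [hv] at huv
      have hsq : (p:ℤ) = ((u.natAbs : ℤ)) ^ 2 := by rw [Int.natAbs_sq]; linarith
      have hq : p = u.natAbs ^ 2 := by exact_mod_cast hsq
      have hdvd : u.natAbs ∣ p := ⟨u.natAbs, by rw [hq]; ring⟩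
      have h2 := hp.two_le
      rcases hp.eq_one_or_self_of_dvd u.natAbs hdvd with h3 | h3
      · rw [h3] at hq; simp at hq; omega
      · rw [h3] at hq
        have hpp : p ^ 2 = p * p := sq p
        have hge : 2 * p ≤ p * p := Nat.mul_le_mul_right p h2
        omega
  · have : ((u.natAbs ^ 2 + 7 * v.natAbs ^ 2 : ℕ) : ℤ) = (p : ℤ) := by
      push_cast
      rw [sq_abs, sq_abs]
      linarith
    exact_mod_cast this.symm
end

section
/- Let b(n) := ∑_{I nonzero ideal of 𝓞_K with N(I) = n} g(I)². For every integer k ≥ 1: (i) b(7^k) = (−7)^k; (ii) if p is a prime with ε(p) = 1 and π ∈ 𝓞_K satisfies p = π·π̄ (where π̄ is the image of π under the nontrivial ℚ-automorphism of K), then b(p^k) = ∑_{t=0}^{k} π^{2t}·π̄^{2(k−t)}; (iii) if q is a prime with ε(q) = −1 then b(q^k) = q^k if k is even and b(q^k) = 0 if k is odd. -/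
open Polynomial NumberField

variable (K : Type) [Field K] [NumberField K]
  [Polynomial.IsSplittingField ℚ K (X ^ 2 + C 7)]

/-- `b(n) := ∑_{I nonzero ideal of 𝓞_K, N(I) = n} g(I)²`, where `g` is a choice of
generator for each nonzero ideal of the principal ideal domain `𝓞_K` (the square of a
generator is independent of this choice since the only units are `±1`). -/
noncomputable def b (g : Ideal (RingOfIntegers K) → RingOfIntegers K) (n : ℕ) :
    RingOfIntegers K :=
  ∑ᶠ I ∈ {I : Ideal (RingOfIntegers K) | Ideal.absNorm I = n}, (g I) ^ 2

/-!
Fix θ ∈ 𝓞_K with θ² = −7. Comparing the integral norms of x, x + 1 and x + θ shows that every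
x ∈ 𝓞_K satisfies 2x = s + tθ with s, t ∈ ℤ and 4·N(x) = s² + 7t². Hence the only units are ±1,
so g(I)² is the square of any generator of I, and b(n) is the sum of x² over generators x of the
ideals of norm n. An ideal of norm pᵏ is a product of prime ideals containing p, and these are:
(θ), of norm 7, for p = 7; the distinct ideals (π) and (π̄), of norm p, when ε(p) = 1; and (q), of
norm q², when ε(q) = −1, since an element of norm q would give 4q = s² + 7t², making q a square
modulo 7. So the ideals of norm pᵏ are (θ)ᵏ, the (π)ᵗ(π̄)ᵏ⁻ᵗ, and (q)^(k/2) (none for odd k).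
-/

theorem Nat.eq_pow_sub_of_pow_mul_eq {p e k n : ℕ} (hp : p.Prime) (h : p ^ e * n = p ^ k) :
    e ≤ k ∧ n = p ^ (k - e) := by
  obtain ⟨i, -, rfl⟩ := (Nat.dvd_prime_pow hp).1 (Dvd.intro_left _ h)
  rw [← pow_add] at h
  have := Nat.pow_right_injective hp.two_le h
  exact ⟨by omega, by rw [← this, Nat.add_sub_cancel_left]⟩

theorem pow_mul_pow_injective_of_not_dvd {α : Type*} [CommMonoidWithZero α] [IsCancelMulZero α]
    {p q : α} (hp : Prime p) (hpq : ¬p ∣ q) (f : ℕ → ℕ) :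
    Function.Injective fun t ↦ p ^ t * q ^ f t := by
  have key (t : ℕ) : emultiplicity p (p ^ t * q ^ f t) = t := by
    rw [emultiplicity_mul hp, emultiplicity_pow_self_of_prime hp, emultiplicity_pow hp,
      emultiplicity_eq_zero.2 hpq, mul_zero, add_zero]
  intro t u h
  exact_mod_cast (key t).symm.trans ((congrArg (emultiplicity p) h).trans (key u))

namespace Ideal

variable {S : Type*} [CommRing S] [IsDedekindDomain S] [Module.Free ℤ S]

theorem eq_of_le_of_absNorm_eq {I J : Ideal S} (h : I ≤ J) (hn : absNorm J = absNorm I)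
    (h0 : absNorm I ≠ 0) : J = I := by
  obtain ⟨L, rfl⟩ := dvd_iff_le.2 h
  rw [map_mul] at hn h0
  have : absNorm L = 1 := Nat.eq_of_mul_eq_mul_left (Nat.pos_of_ne_zero (left_ne_zero_of_mul h0))
    (hn.symm.trans (mul_one _).symm)
  rw [absNorm_eq_one_iff.1 this, mul_top]

theorem eq_of_le_of_absNorm_prime {I Q : Ideal S} (hQ : Q.IsPrime) (h : I ≤ Q)
    (hI : (absNorm I).Prime) : Q = I := by
  rcases hI.eq_one_or_self_of_dvd _ (absNorm_dvd_absNorm_of_le h) with h1 | h1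
  · exact absurd (absNorm_eq_one_iff.1 h1) hQ.ne_top
  · exact eq_of_le_of_absNorm_eq h h1 hI.ne_zero

theorem eq_span_or_eq_span_of_mul_mem {Q : Ideal S} (hQ : Q.IsPrime) {x y : S} (hxy : x * y ∈ Q)
    (hx : (absNorm (span {x})).Prime) (hy : (absNorm (span {y})).Prime) :
    Q = span {x} ∨ Q = span {y} :=
  (hQ.mem_or_mem hxy).imp
    (fun h ↦ eq_of_le_of_absNorm_prime hQ ((span_singleton_le_iff_mem _).2 h) hx)
    (fun h ↦ eq_of_le_of_absNorm_prime hQ ((span_singleton_le_iff_mem _).2 h) hy)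

theorem exists_isMaximal_natCast_mem_dvd [Module.Finite ℤ S] {p k : ℕ} (hp : p.Prime) (hk : k ≠ 0)
    {I : Ideal S} (hI : absNorm I = p ^ k) : ∃ Q : Ideal S, Q.IsMaximal ∧ (p : S) ∈ Q ∧ Q ∣ I := by
  obtain ⟨Q, hQ, hunder, hQI⟩ :=
    exists_isMaximal_dvd_of_dvd_absNorm' hp I (hI ▸ dvd_pow_self p hk)
  have : (p : ℤ) ∈ Q.under ℤ := hunder ▸ mem_span_singleton_self _
  exact ⟨Q, hQ, by simpa using this, hQI⟩

theorem absNorm_eq_pow_iff_of_unique_prime [Module.Finite ℤ S] {p e : ℕ} (hp : p.Prime)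
    (he : 0 < e) {P : Ideal S} (hP : absNorm P = p ^ e)
    (hcover : ∀ Q : Ideal S, Q.IsMaximal → (p : S) ∈ Q → Q = P)
    (k : ℕ) (I : Ideal S) : absNorm I = p ^ k ↔ ∃ m, k = e * m ∧ I = P ^ m := by
  refine ⟨fun hI ↦ ?_, ?_⟩
  · induction k using Nat.strong_induction_on generalizing I with
    | _ k ih =>
    rcases eq_or_ne k 0 with rfl | hk
    · exact ⟨0, rfl, by simpa using hI⟩
    obtain ⟨Q, hQ, hpQ, J, rfl⟩ := exists_isMaximal_natCast_mem_dvd hp hk hI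
    obtain rfl := hcover Q hQ hpQ
    rw [map_mul, hP] at hI
    obtain ⟨hek, hJ⟩ := Nat.eq_pow_sub_of_pow_mul_eq hp hI
    obtain ⟨m, hm, rfl⟩ := ih (k - e) (by omega) J hJ
    exact ⟨m + 1, by rw [mul_add_one]; omega, (pow_succ' _ m).symm⟩
  · rintro ⟨m, rfl, rfl⟩
    rw [map_pow, hP, pow_mul]

theorem absNorm_eq_pow_iff_of_two_primes [Module.Finite ℤ S] {p : ℕ} (hp : p.Prime)
    {P P' : Ideal S} (hP : absNorm P = p) (hP' : absNorm P' = p)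
    (hcover : ∀ Q : Ideal S, Q.IsMaximal → (p : S) ∈ Q → Q = P ∨ Q = P') (k : ℕ) (I : Ideal S) :
    absNorm I = p ^ k ↔ ∃ t ≤ k, I = P ^ t * P' ^ (k - t) := by
  refine ⟨fun hI ↦ ?_, ?_⟩
  · induction k generalizing I with
    | zero => exact ⟨0, le_rfl, by simpa using hI⟩
    | succ k ih =>
      obtain ⟨Q, hQ, hpQ, J, rfl⟩ := exists_isMaximal_natCast_mem_dvd hp k.succ_ne_zero hI
      have hJ (hQp : absNorm Q = p) : absNorm J = p ^ k := by
        rw [map_mul, hQp, pow_succ'] at hI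
        exact Nat.eq_of_mul_eq_mul_left hp.pos hI
      rcases hcover Q hQ hpQ with rfl | rfl
      · obtain ⟨t, ht, rfl⟩ := ih J (hJ hP)
        refine ⟨t + 1, by omega, ?_⟩
        rw [Nat.add_sub_add_right, pow_succ]
        ring
      · obtain ⟨t, ht, rfl⟩ := ih J (hJ hP')
        refine ⟨t, by omega, ?_⟩
        rw [Nat.sub_add_comm ht, pow_succ]
        ring
  · rintro ⟨t, ht, rfl⟩
    rw [map_mul, map_pow, map_pow, hP, hP', pow_mul_pow_sub _ ht]

end Ideal

namespace QSqrtNegSeven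

variable {K}

theorem exists_sq_eq_neg_seven : ∃ r : 𝓞 K, r ^ 2 = -7 := by
  have hdeg : (X ^ 2 + C 7 : ℚ[X]).degree = 2 := by compute_degree!
  obtain ⟨r, hr⟩ := (IsSplittingField.splits K (X ^ 2 + C 7 : ℚ[X])).exists_eval_eq_zero
    (by rw [degree_map, hdeg]; decide)
  have hr : r ^ 2 = -7 := by
    simp only [Polynomial.map_add, Polynomial.map_pow, map_X, map_C, eq_ratCast, Rat.cast_ofNat,
      eval_add, eval_pow, eval_X, eval_C] at hr
    linear_combination hr
  have hint : IsIntegral ℤ r :=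
    ⟨X ^ 2 + C 7, monic_X_pow_add_C _ two_ne_zero, by simp [hr]⟩
  refine ⟨⟨r, hint⟩, RingOfIntegers.ext ?_⟩
  push_cast
  exact hr

noncomputable def sqrtNegSeven : 𝓞 K := exists_sq_eq_neg_seven.choose

local notation "θ" => (sqrtNegSeven : 𝓞 K)

theorem sqrtNegSeven_sq : θ ^ 2 = -7 := exists_sq_eq_neg_seven.choose_spec

theorem coe_sqrtNegSeven_sq : (θ : K) ^ 2 = -7 := by
  have := congrArg ((↑) : 𝓞 K → K) sqrtNegSeven_sq
  push_cast at this
  exact this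

theorem sqrtNegSeven_ne_zero : (θ : K) ≠ 0 := by
  intro h
  have := coe_sqrtNegSeven_sq (K := K)
  rw [h] at this
  norm_num at this

theorem sq_eq_neg_seven_iff {x : K} : x ^ 2 = -7 ↔ x = θ ∨ x = -θ := by
  rw [← coe_sqrtNegSeven_sq, sq_eq_sq_iff_eq_or_eq_neg]

theorem adjoin_sqrtNegSeven : Algebra.adjoin ℚ {(θ : K)} = ⊤ := by
  rw [eq_top_iff, ← IsSplittingField.adjoin_rootSet K (X ^ 2 + C 7 : ℚ[X])]
  refine Algebra.adjoin_le fun x hx ↦ ?_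
  have hx : x ^ 2 = -7 := by
    have := (mem_rootSet.1 hx).2
    simp only [map_add, map_pow, aeval_X, aeval_C, eq_ratCast, Rat.cast_ofNat] at this
    linear_combination this
  rcases sq_eq_neg_seven_iff.1 hx with rfl | rfl
  · exact Algebra.self_mem_adjoin_singleton ℚ _
  · exact neg_mem (Algebra.self_mem_adjoin_singleton ℚ _)

theorem exists_rat_coords (x : K) : ∃ a b : ℚ, x = a + b * θ := by
  have hx : x ∈ Algebra.adjoin ℚ {(θ : K)} := by rw [adjoin_sqrtNegSeven]; trivial
  induction hx using Algebra.adjoin_induction with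
  | mem y hy => exact ⟨0, 1, by rw [Set.mem_singleton_iff.1 hy]; simp⟩
  | algebraMap a => exact ⟨a, 0, by simp⟩
  | add y z _ _ hy hz =>
    obtain ⟨a, b, rfl⟩ := hy
    obtain ⟨c, d, rfl⟩ := hz
    exact ⟨a + c, b + d, by push_cast; ring⟩
  | mul y z _ _ hy hz =>
    obtain ⟨a, b, rfl⟩ := hy
    obtain ⟨c, d, rfl⟩ := hz
    refine ⟨a * c - 7 * b * d, a * d + b * c, ?_⟩
    push_cast
    linear_combination b * d * coe_sqrtNegSeven_sq (K := K)

theorem rat_coords_eq_zero {a b : ℚ} (h : (a : K) + b * θ = 0) : a = 0 ∧ b = 0 := by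
  have hsq : ((a ^ 2 + 7 * b ^ 2 : ℚ) : K) = 0 := by
    push_cast
    linear_combination (a - b * θ) * h + b ^ 2 * coe_sqrtNegSeven_sq (K := K)
  have : a ^ 2 + 7 * b ^ 2 = 0 := by exact_mod_cast hsq
  constructor <;> nlinarith [sq_nonneg a, sq_nonneg b]

theorem finrank_eq_two : Module.finrank ℚ K = 2 := by
  have hli : LinearIndependent ℚ ![1, (θ : K)] := by
    refine LinearIndependent.pair_iff.2 fun a b h ↦ rat_coords_eq_zero (K := K) ?_
    simpa [Algebra.smul_def, add_comm] using h
  have hsp : ⊤ ≤ Submodule.span ℚ (Set.range ![1, (θ : K)]) := by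
    rintro x -
    obtain ⟨a, b, rfl⟩ := exists_rat_coords x
    refine Submodule.mem_span_range_iff_exists_fun ℚ |>.2 ⟨![a, b], ?_⟩
    simp [Algebra.smul_def]
  simpa using Module.finrank_eq_card_basis (Module.Basis.mk hli hsp)

instance : IsGalois ℚ K where
  to_normal := Normal.of_isSplittingField (X ^ 2 + C 7)

theorem card_aut : Nat.card (K ≃ₐ[ℚ] K) = 2 := by
  rw [IsGalois.card_aut_eq_finrank, finrank_eq_two]

theorem exists_ne_refl : ∃ σ : K ≃ₐ[ℚ] K, σ ≠ AlgEquiv.refl := by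
  have : Nontrivial (K ≃ₐ[ℚ] K) :=
    Finite.one_lt_card_iff_nontrivial.1 (by rw [card_aut]; omega)
  exact exists_ne _

variable {σ : K ≃ₐ[ℚ] K}

theorem apply_sqrtNegSeven (hσ : σ ≠ AlgEquiv.refl) : σ θ = -θ := by
  have hsq : σ θ ^ 2 = -7 := by rw [← map_pow, coe_sqrtNegSeven_sq, map_neg, map_ofNat]
  refine (sq_eq_neg_seven_iff.1 hsq).resolve_left fun hfix ↦ hσ (AlgEquiv.ext fun x ↦ ?_)
  obtain ⟨a, b, rfl⟩ := exists_rat_coords x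
  simp [hfix]

theorem algebraMap_norm (hσ : σ ≠ AlgEquiv.refl) (x : K) :
    algebraMap ℚ K (Algebra.norm ℚ x) = x * σ x := by
  classical
  have huniv : (Finset.univ : Finset (K ≃ₐ[ℚ] K)) = {AlgEquiv.refl, σ} := by
    refine (Finset.eq_univ_of_card _ ?_).symm
    rw [Finset.card_pair hσ.symm, ← Nat.card_eq_fintype_card, card_aut]
  rw [Algebra.norm_eq_prod_automorphisms, huniv, Finset.prod_pair hσ.symm]
  rfl

theorem norm_rat_coords (a b : ℚ) : Algebra.norm ℚ ((a : K) + b * θ) = a ^ 2 + 7 * b ^ 2 := by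
  obtain ⟨σ, hσ⟩ := exists_ne_refl (K := K)
  apply (algebraMap ℚ K).injective
  rw [algebraMap_norm hσ]
  simp only [map_add, map_mul, map_ratCast, apply_sqrtNegSeven hσ, eq_ratCast]
  push_cast
  linear_combination (-(b : K) ^ 2) * coe_sqrtNegSeven_sq (K := K)

theorem norm_int_of_eq_rat_coords {x : 𝓞 K} {a b : ℚ} (h : (x : K) = a + b * θ) :
    (Algebra.norm ℤ x : ℚ) = a ^ 2 + 7 * b ^ 2 := by
  rw [Algebra.coe_norm_int, h, norm_rat_coords]

theorem exists_int_coords (x : 𝓞 K) :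
    ∃ s t : ℤ, 2 * (x : K) = s + t * θ ∧ 4 * Algebra.norm ℤ x = s ^ 2 + 7 * t ^ 2 := by
  obtain ⟨a, b, hx⟩ := exists_rat_coords (x : K)
  have h₀ := norm_int_of_eq_rat_coords hx
  have h₁ := norm_int_of_eq_rat_coords (x := x + 1) (a := a + 1) (b := b)
    (by push_cast; linear_combination hx)
  have h₂ := norm_int_of_eq_rat_coords (x := x + θ) (a := a) (b := b + 1)
    (by push_cast; linear_combination hx)
  set u := Algebra.norm ℤ (x + 1) - Algebra.norm ℤ x - 1
  set v := Algebra.norm ℤ (x + θ) - Algebra.norm ℤ x - 7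
  have hu : (u : ℚ) = 2 * a := by simp only [u]; push_cast; rw [h₀, h₁]; ring
  have hv : (v : ℚ) = 14 * b := by simp only [v]; push_cast; rw [h₀, h₂]; ring
  have hv_sq : v ^ 2 = 7 * (4 * Algebra.norm ℤ x - u ^ 2) := by
    have : ((v ^ 2 : ℤ) : ℚ) = ((7 * (4 * Algebra.norm ℤ x - u ^ 2) : ℤ) : ℚ) := by
      push_cast
      rw [hu, hv, h₀]
      ring
    exact_mod_cast this
  obtain ⟨w, hw⟩ : (7 : ℤ) ∣ v := Int.Prime.dvd_pow' (by norm_num) ⟨_, hv_sq⟩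
  have hw' : (w : ℚ) = 2 * b := by
    have : (v : ℚ) = 7 * w := by rw [hw]; push_cast; ring
    linarith
  refine ⟨u, w, ?_, ?_⟩
  · rw [hx, ← Rat.cast_intCast u, ← Rat.cast_intCast w, hu, hw']
    push_cast
    ring
  · rw [hw] at hv_sq
    linarith

theorem norm_int_nonneg (x : 𝓞 K) : 0 ≤ Algebra.norm ℤ x := by
  obtain ⟨s, t, -, h⟩ := exists_int_coords x
  nlinarith [sq_nonneg s, sq_nonneg t]

theorem natCast_absNorm_span_singleton (x : 𝓞 K) :
    (Ideal.absNorm (Ideal.span {x}) : ℤ) = Algebra.norm ℤ x := by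
  rw [Ideal.absNorm_span_singleton, Int.natCast_natAbs, abs_of_nonneg (norm_int_nonneg x)]

theorem absNorm_span_sqrtNegSeven : Ideal.absNorm (Ideal.span {θ}) = 7 := by
  have : (Algebra.norm ℤ θ : ℚ) = 7 := by
    rw [norm_int_of_eq_rat_coords (a := 0) (b := 1) (by simp)]
    norm_num
  have h := natCast_absNorm_span_singleton θ
  rw [show Algebra.norm ℤ θ = 7 by exact_mod_cast this] at h
  exact_mod_cast h

theorem absNorm_span_natCast (n : ℕ) : Ideal.absNorm (Ideal.span {(n : 𝓞 K)}) = n ^ 2 := by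
  have : (Algebra.norm ℤ (n : 𝓞 K) : ℚ) = n ^ 2 := by
    rw [norm_int_of_eq_rat_coords (a := n) (b := 0) (by simp)]
    ring
  have h := natCast_absNorm_span_singleton (n : 𝓞 K)
  rw [show Algebra.norm ℤ (n : 𝓞 K) = n ^ 2 by exact_mod_cast this] at h
  exact_mod_cast h

theorem coe_unit_sq (u : (𝓞 K)ˣ) : (u : 𝓞 K) ^ 2 = 1 := by
  obtain ⟨s, t, hu, hN⟩ := exists_int_coords (u : 𝓞 K)
  have hN1 : Algebra.norm ℤ (u : 𝓞 K) = 1 := by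
    rcases Int.isUnit_iff.1 (u.isUnit.map (Algebra.norm ℤ)) with h | h
    · exact h
    · nlinarith [sq_nonneg s, sq_nonneg t]
  have ht : t = 0 := by nlinarith [sq_nonneg s, sq_nonneg t]
  subst ht
  rw [Int.cast_zero, zero_mul, add_zero] at hu
  have hs : (s : K) ^ 2 = 4 := by exact_mod_cast (by linarith : s ^ 2 = 4)
  apply RingOfIntegers.ext
  push_cast
  linear_combination ((2 * (u : K) + s) * hu + hs) / 4

theorem sq_eq_sq_of_span_eq {x y : 𝓞 K} (h : Ideal.span {x} = Ideal.span {y}) :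
    x ^ 2 = y ^ 2 := by
  obtain ⟨u, rfl⟩ := Ideal.span_singleton_eq_span_singleton.1 h
  rw [mul_pow, coe_unit_sq, mul_one]

theorem eq_span_sqrtNegSeven {Q : Ideal (𝓞 K)} (hQ : Q.IsPrime) (h7 : (7 : 𝓞 K) ∈ Q) :
    Q = Ideal.span {θ} := by
  have hθ : θ ∈ Q := hQ.mem_of_pow_mem 2 (by rw [sqrtNegSeven_sq]; exact Q.neg_mem h7)
  exact Ideal.eq_of_le_of_absNorm_prime hQ (Ideal.span_singleton_le_iff_mem _ |>.2 hθ)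
    (by rw [absNorm_span_sqrtNegSeven]; norm_num)

theorem absNorm_span_ne_of_legendreSym_eq_neg_one {q : ℕ} (hl : legendreSym 7 q = -1)
    (x : 𝓞 K) : Ideal.absNorm (Ideal.span {x}) ≠ q := by
  intro hx
  obtain ⟨s, t, -, hN⟩ := exists_int_coords x
  rw [← natCast_absNorm_span_singleton, hx] at hN
  have hN7 := congrArg (Int.cast : ℤ → ZMod 7) hN
  push_cast at hN7
  refine (legendreSym.eq_neg_one_iff' 7).1 hl ⟨3 * s, ?_⟩
  -- modulo 7, `4 * q = s ^ 2` and `4⁻¹ = 2 = 3 ^ 2`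
  linear_combination (norm := ring_nf) 2 * hN7
  reduce_mod_char

theorem eq_span_natCast_of_legendreSym_eq_neg_one {q : ℕ} (hq : q.Prime)
    (hl : legendreSym 7 q = -1) {Q : Ideal (𝓞 K)} (hQ : Q.IsPrime) (hQp : Q.IsPrincipal)
    (hqQ : (q : 𝓞 K) ∈ Q) : Q = Ideal.span {(q : 𝓞 K)} := by
  have hle : Ideal.span {(q : 𝓞 K)} ≤ Q := (Ideal.span_singleton_le_iff_mem _).2 hqQ
  have hdvd := Ideal.absNorm_dvd_absNorm_of_le hle
  rw [absNorm_span_natCast] at hdvd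
  obtain ⟨i, hi, hQn⟩ := (Nat.dvd_prime_pow hq).1 hdvd
  interval_cases i
  · exact absurd (Ideal.absNorm_eq_one_iff.1 hQn) hQ.ne_top
  · obtain ⟨x, rfl⟩ := hQp.principal
    exact absurd (hQn.trans (pow_one q)) (absNorm_span_ne_of_legendreSym_eq_neg_one hl x)
  · exact Ideal.eq_of_le_of_absNorm_eq hle (by rw [hQn, absNorm_span_natCast])
      (by rw [absNorm_span_natCast]; exact pow_ne_zero 2 hq.ne_zero)

theorem absNorm_span_eq_of_apply_eq (hσ : σ ≠ AlgEquiv.refl) {p : ℕ} {π π' : 𝓞 K}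
    (hσπ : σ π = π') (hp : (p : 𝓞 K) = π * π') :
    Ideal.absNorm (Ideal.span {π}) = p := by
  have hK : algebraMap ℚ K (Algebra.norm ℚ (π : K)) = algebraMap ℚ K p := by
    rw [algebraMap_norm hσ, hσπ, map_natCast]
    exact_mod_cast (congrArg ((↑) : 𝓞 K → K) hp).symm
  have hN : Algebra.norm ℤ π = p := by
    exact_mod_cast (Algebra.coe_norm_int π).trans ((algebraMap ℚ K).injective hK)
  exact_mod_cast (natCast_absNorm_span_singleton π).trans hN

theorem absNorm_span_eq_of_mul_eq {p : ℕ} (hp : p ≠ 0) {π π' : 𝓞 K}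
    (hπp : (p : 𝓞 K) = π * π') (hπ : Ideal.absNorm (Ideal.span {π}) = p) :
    Ideal.absNorm (Ideal.span {π'}) = p := by
  have := absNorm_span_natCast (K := K) p
  rw [hπp, ← Ideal.span_singleton_mul_span_singleton, map_mul, hπ, sq] at this
  exact Nat.eq_of_mul_eq_mul_left (Nat.pos_of_ne_zero hp) this

theorem span_ne_span_of_apply_eq (hσ : σ ≠ AlgEquiv.refl) {p : ℕ} (hp : p.Prime)
    (hp7 : (p : ZMod 7) ≠ 0) {π π' : 𝓞 K} (hσπ : σ π = π')
    (hπ : Ideal.absNorm (Ideal.span {π}) = p) : Ideal.span {π} ≠ Ideal.span {π'} := by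
  intro h
  obtain ⟨s, t, hst, hN⟩ := exists_int_coords π
  rw [← natCast_absNorm_span_singleton, hπ] at hN
  have hst' : 2 * (π' : K) = s - t * θ := by
    have := congrArg σ hst
    rw [map_mul, map_ofNat, hσπ, map_add, map_mul, map_intCast, map_intCast,
      apply_sqrtNegSeven hσ] at this
    linear_combination this
  rcases sq_eq_sq_iff_eq_or_eq_neg.1 (sq_eq_sq_of_span_eq h).symm with rfl | rfl
  · have ht : (t : K) * θ = 0 := by linear_combination (hst' - hst) / 2
    obtain rfl : t = 0 := by
      exact_mod_cast (mul_eq_zero.1 ht).resolve_right sqrtNegSeven_ne_zero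
    obtain ⟨c, rfl⟩ : (2 : ℤ) ∣ s :=
      Int.prime_two.dvd_of_dvd_pow (n := 2) ⟨2 * p, by linarith⟩
    have hpc : (p : ℤ) = c ^ 2 := by linarith
    exact not_prime_pow (by norm_num) (hpc ▸ Nat.prime_iff_prime_int.1 hp)
  · have hs : (s : K) = 0 := by
      push_cast at hst'
      linear_combination -(hst + hst') / 2
    obtain rfl : s = 0 := by exact_mod_cast hs
    have hN7 := congrArg (Int.cast : ℤ → ZMod 7) hN
    push_cast at hN7
    refine hp7 ?_
    linear_combination (norm := ring_nf) 2 * hN7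
    reduce_mod_char

variable {g : Ideal (𝓞 K) → 𝓞 K}

theorem b_eq_sum_sq (hg : ∀ I : Ideal (𝓞 K), I ≠ 0 → I = Ideal.span {g I}) {n : ℕ}
    (hn : n ≠ 0) {ι : Type*} (s : Finset ι) (x : ι → 𝓞 K)
    (hs : ∀ I : Ideal (𝓞 K), Ideal.absNorm I = n ↔ ∃ i ∈ s, I = Ideal.span {x i})
    (hinj : Set.InjOn (fun i ↦ Ideal.span {x i}) s) : b K g n = ∑ i ∈ s, x i ^ 2 := by
  classical
  have hset : {I | Ideal.absNorm I = n} =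
      (s.image fun i ↦ Ideal.span {x i} : Set (Ideal (𝓞 K))) := by
    ext I
    simp [hs, eq_comm]
  rw [b, hset, finsum_mem_coe_finset, Finset.sum_image hinj]
  refine Finset.sum_congr rfl fun i hi ↦ sq_eq_sq_of_span_eq (hg _ fun h0 ↦ hn ?_).symm
  rw [← (hs _).2 ⟨i, hi, rfl⟩, h0, Ideal.zero_eq_bot, Ideal.absNorm_bot]

theorem b_eq_sq (hg : ∀ I : Ideal (𝓞 K), I ≠ 0 → I = Ideal.span {g I}) {n : ℕ}
    (hn : n ≠ 0) (x : 𝓞 K) (hs : ∀ I : Ideal (𝓞 K), Ideal.absNorm I = n ↔ I = Ideal.span {x}) :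
    b K g n = x ^ 2 := by
  simpa using b_eq_sum_sq hg hn {()} (fun _ ↦ x) (by simpa using hs) (by simp)

theorem b_seven_pow (hg : ∀ I : Ideal (𝓞 K), I ≠ 0 → I = Ideal.span {g I}) (k : ℕ) :
    b K g (7 ^ k) = (-7) ^ k := by
  have hcl := Ideal.absNorm_eq_pow_iff_of_unique_prime (p := 7) (by norm_num) one_pos
    (P := Ideal.span {θ}) (by rw [pow_one, absNorm_span_sqrtNegSeven])
    (fun Q hQ h7 ↦ eq_span_sqrtNegSeven hQ.isPrime (by exact_mod_cast h7)) k
  rw [b_eq_sq hg (by positivity) (θ ^ k) (by simp [hcl, Ideal.span_singleton_pow]),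
    ← pow_mul, mul_comm, pow_mul, sqrtNegSeven_sq]

theorem b_pow_of_legendreSym_eq_neg_one
    (hg : ∀ I : Ideal (𝓞 K), I ≠ 0 → I = Ideal.span {g I}) {q : ℕ} (hq : q.Prime)
    (hl : legendreSym 7 q = -1) (k : ℕ) :
    (Even k → b K g (q ^ k) = (q : 𝓞 K) ^ k) ∧ (Odd k → b K g (q ^ k) = 0) := by
  have hcover (Q : Ideal (𝓞 K)) (hQ : Q.IsMaximal) (hqQ : (q : 𝓞 K) ∈ Q) :
      Q = Ideal.span {(q : 𝓞 K)} := by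
    refine eq_span_natCast_of_legendreSym_eq_neg_one hq hl hQ.isPrime
      ⟨g Q, hg Q fun h0 ↦ ?_⟩ hqQ
    rw [h0, Ideal.zero_eq_bot, Ideal.mem_bot] at hqQ
    exact hq.ne_zero (by exact_mod_cast hqQ)
  have hcl :=
    Ideal.absNorm_eq_pow_iff_of_unique_prime hq two_pos (absNorm_span_natCast q) hcover k
  constructor
  · rintro ⟨m, rfl⟩
    rw [b_eq_sq hg (pow_ne_zero _ hq.ne_zero) ((q : 𝓞 K) ^ m) fun I ↦ ?_, ← pow_mul, mul_two]
    rw [hcl, ← Ideal.span_singleton_pow]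
    constructor
    · rintro ⟨m', hm', rfl⟩
      rw [show m' = m by omega]
    · rintro rfl
      exact ⟨m, by ring, rfl⟩
  · rintro ⟨m, rfl⟩
    have hs (I : Ideal (𝓞 K)) : Ideal.absNorm I ≠ q ^ (2 * m + 1) := fun hI ↦ by
      obtain ⟨m', hm', -⟩ := (hcl I).1 hI
      omega
    simp [b, hs]

theorem b_pow_of_legendreSym_eq_one (hg : ∀ I : Ideal (𝓞 K), I ≠ 0 → I = Ideal.span {g I})
    {p : ℕ} (hp : p.Prime) (hl : legendreSym 7 p = 1) (hσ : σ ≠ AlgEquiv.refl) {π π' : 𝓞 K}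
    (hσπ : σ π = π') (hpπ : (p : 𝓞 K) = π * π') (k : ℕ) :
    b K g (p ^ k) = ∑ t ∈ Finset.range (k + 1), π ^ (2 * t) * π' ^ (2 * (k - t)) := by
  have hp7 : (p : ZMod 7) ≠ 0 := fun h ↦ by
    have := (legendreSym.eq_zero_iff 7 p).2 (by exact_mod_cast h)
    rw [hl] at this
    exact one_ne_zero this
  have hπ := absNorm_span_eq_of_apply_eq hσ hσπ hpπ
  have hπ' := absNorm_span_eq_of_mul_eq hp.ne_zero hpπ hπ
  have hcover (Q : Ideal (𝓞 K)) (hQ : Q.IsMaximal) (hpQ : (p : 𝓞 K) ∈ Q) :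
      Q = Ideal.span {π} ∨ Q = Ideal.span {π'} :=
    Ideal.eq_span_or_eq_span_of_mul_mem hQ.isPrime (hpπ ▸ hpQ) (hπ ▸ hp) (hπ' ▸ hp)
  have hPprime : (Ideal.span {π}).IsPrime := Ideal.isPrime_of_irreducible_absNorm (hπ ▸ hp)
  have hprime : Prime (Ideal.span {π}) :=
    Ideal.prime_of_isPrime (fun h ↦ hp.ne_zero (by rw [← hπ, h, Ideal.absNorm_bot])) hPprime
  have hndvd : ¬Ideal.span {π} ∣ Ideal.span {π'} := fun h ↦
    span_ne_span_of_apply_eq hσ hp hp7 hσπ hπ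
      (Ideal.eq_of_le_of_absNorm_prime hPprime (Ideal.le_of_dvd h) (hπ' ▸ hp))
  have hspan (t : ℕ) : Ideal.span {π ^ t * π' ^ (k - t)} =
      Ideal.span {π} ^ t * Ideal.span {π'} ^ (k - t) := by
    rw [Ideal.span_singleton_pow, Ideal.span_singleton_pow,
      Ideal.span_singleton_mul_span_singleton]
  rw [b_eq_sum_sq hg (pow_ne_zero _ hp.ne_zero) (Finset.range (k + 1))
    (fun t ↦ π ^ t * π' ^ (k - t)) ?_ ?_]
  · refine Finset.sum_congr rfl fun t _ ↦ ?_
    rw [mul_pow, ← pow_mul, ← pow_mul, mul_comm t, mul_comm (k - t)]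
  · intro I
    simp [Ideal.absNorm_eq_pow_iff_of_two_primes hp hπ hπ' hcover, hspan]
  · intro t _ u _ h
    simp only [hspan] at h
    exact pow_mul_pow_injective_of_not_dvd hprime hndvd (k - ·) h

end QSqrtNegSeven

theorem b_prime_pow (g : Ideal (RingOfIntegers K) → RingOfIntegers K)
    (hg : ∀ I : Ideal (RingOfIntegers K), I ≠ 0 → I = Ideal.span {g I})
    (k : ℕ) :
    b K g (7 ^ k) = (-7 : RingOfIntegers K) ^ k ∧
    (∀ p : ℕ, p.Prime → legendreSym 7 p = 1 →
      ∀ (σ : K ≃ₐ[ℚ] K), σ ≠ AlgEquiv.refl →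
      ∀ π πbar : RingOfIntegers K,
        σ (algebraMap (RingOfIntegers K) K π) = algebraMap (RingOfIntegers K) K πbar →
        (p : RingOfIntegers K) = π * πbar →
        b K g (p ^ k) = ∑ t ∈ Finset.range (k + 1), π ^ (2 * t) * πbar ^ (2 * (k - t))) ∧
    (∀ q : ℕ, q.Prime → legendreSym 7 q = -1 →
      (Even k → b K g (q ^ k) = (q : RingOfIntegers K) ^ k) ∧
      (Odd k → b K g (q ^ k) = 0)) :=
  ⟨QSqrtNegSeven.b_seven_pow hg k,
    fun _p hp hl _σ hσ _π _πbar hσπ hpπ ↦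
      QSqrtNegSeven.b_pow_of_legendreSym_eq_one hg hp hl hσ hσπ hpπ k,
    fun _q hq hl ↦ QSqrtNegSeven.b_pow_of_legendreSym_eq_neg_one hg hq hl k⟩
end

section
/- The function b(n) := ∑_{I nonzero ideal of 𝓞_K with N(I) = n} g(I)² is multiplicative: b(1) = 1, and b(m·n) = b(m)·b(n) whenever m and n are coprime positive integers. -/
/-!
For coprime `m` and `n`, the ideals of norm `mn` correspond bijectively to the pairs of ideals of
norms `m` and `n`, via `I ↦ (I + (m), I + (n))` with inverse `(J, J') ↦ JJ'`. As `g(J) g(J')`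
generates `JJ'`, it differs from `g(JJ')` by a unit, and the units of `𝓞_K` are `±1`: identifying
`K` with `ℚ[ω]/(ω² + 7)`, a unit `x + yω` has norm `x² + 7y² = 1`, and the integrality of the traces
`2x` and `-14y` of `x + yω` and `(x + yω)ω` forces `y = 0`.
-/

open Polynomial NumberField

variable (K : Type) [Field K] [NumberField K]
  [Polynomial.IsSplittingField ℚ K (X ^ 2 + C 7)]

open scoped QuadraticAlgebra

theorem Nat.Coprime.eq_of_dvd_of_dvd_of_mul_eq {a b m n : ℕ} (hmn : m.Coprime n) (ha : a ∣ m)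
    (hb : b ∣ n) (h : a * b = m * n) : a = m :=
  Nat.dvd_antisymm ha <|
    (hmn.coprime_dvd_right hb).dvd_of_dvd_mul_right (h ▸ _root_.dvd_mul_right m n)

theorem Int.eq_zero_of_seven_mul_sq_add_sq_eq {s r : ℤ} (h : 7 * s ^ 2 + r ^ 2 = 28) : r = 0 := by
  have hr : -5 ≤ r ∧ r ≤ 5 := by constructor <;> nlinarith [sq_nonneg s]
  generalize s ^ 2 = t at h
  obtain ⟨hr₁, hr₂⟩ := hr
  interval_cases r <;> omega

theorem Rat.exists_intCast_eq_of_isIntegral {q : ℚ} (hq : IsIntegral ℤ q) :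
    ∃ n : ℤ, (n : ℚ) = q := by
  simpa using IsIntegrallyClosed.isIntegral_iff.mp hq

theorem finsum_mem_prod_mul {α β R : Type*} [CommSemiring R] {s : Set α} {t : Set β}
    (hs : s.Finite) (ht : t.Finite) (f : α → R) (g : β → R) :
    ∑ᶠ p ∈ s ×ˢ t, f p.1 * g p.2 = (∑ᶠ a ∈ s, f a) * ∑ᶠ b ∈ t, g b := by
  lift s to Finset α using hs
  lift t to Finset β using ht
  rw [← Finset.coe_product, finsum_mem_coe_finset, finsum_mem_coe_finset, finsum_mem_coe_finset,
    Finset.sum_mul_sum, Finset.sum_product]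

namespace QuadraticAlgebra

section

variable {R : Type*} [CommRing R] {a b : R} {z : QuadraticAlgebra R a b}

theorem isIntegral_star (hz : IsIntegral ℤ z) : IsIntegral ℤ (star z) :=
  hz.map (starRingEnd (QuadraticAlgebra R a b)).toIntAlgHom

theorem isIntegral_norm (hz : IsIntegral ℤ z) : IsIntegral ℤ (norm z) := by
  rw [← isIntegral_algebraMap_iff (algebraMap_injective (a := a) (b := b)),
    algebraMap_norm_eq_mul_star]
  exact hz.mul (isIntegral_star hz)

theorem isIntegral_trace (hz : IsIntegral ℤ z) : IsIntegral ℤ (trace z) := by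
  rw [← isIntegral_algebraMap_iff (algebraMap_injective (a := a) (b := b)),
    algebraMap_trace_eq_add_star]
  exact hz.add (isIntegral_star hz)

end

theorem sq_eq_one_of_mul_eq_one {z w : QuadraticAlgebra ℚ (-7) 0} (hz : IsIntegral ℤ z)
    (hw : IsIntegral ℤ w) (hzw : z * w = 1) : z ^ 2 = 1 := by
  have hω : IsIntegral ℤ (ω : QuadraticAlgebra ℚ (-7) 0) :=
    ⟨X ^ 2 + C 7, monic_X_pow_add_C 7 two_ne_zero, by ext <;> simp [pow_two]⟩
  obtain ⟨N, hN⟩ := Rat.exists_intCast_eq_of_isIntegral (isIntegral_norm hz)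
  obtain ⟨N', hN'⟩ := Rat.exists_intCast_eq_of_isIntegral (isIntegral_norm hw)
  obtain ⟨s, hs⟩ := Rat.exists_intCast_eq_of_isIntegral (isIntegral_trace hz)
  obtain ⟨r, hr⟩ := Rat.exists_intCast_eq_of_isIntegral (isIntegral_trace (hz.mul hω))
  have hnorm : z.re ^ 2 + 7 * z.im ^ 2 = N := by rw [hN, norm_def]; ring
  have hs' : (s : ℚ) = 2 * z.re := by simp [hs, trace_def]
  have hr' : (r : ℚ) = -14 * z.im := by simp [hr, trace_def]; ring
  have hN1 : N = 1 := by
    have hNN' : N * N' = 1 := by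
      exact_mod_cast (show (N * N' : ℚ) = 1 by rw [hN, hN', ← map_mul, hzw, norm_one])
    have hN0 : (0 : ℚ) ≤ N := hnorm ▸ by positivity
    exact Int.eq_one_of_mul_eq_one_right (by exact_mod_cast hN0) hNN'
  rw [hN1, Int.cast_one] at hnorm
  have him : z.im = 0 := by
    have hsr : 7 * s ^ 2 + r ^ 2 = 28 := by
      exact_mod_cast (show (7 * s ^ 2 + r ^ 2 : ℚ) = 28 by
        rw [hs', hr']; linear_combination 28 * hnorm)
    rw [Int.eq_zero_of_seven_mul_sq_add_sq_eq hsr, Int.cast_zero] at hr'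
    linarith
  ext <;> simp [pow_two, him]
  nlinarith [hnorm]

end QuadraticAlgebra

namespace Ideal

section

variable {R : Type*} [CommRing R]

theorem sup_mul_sup_eq_self {I A B : Ideal R} (hAB : A ⊔ B = ⊤) (h : A * B ≤ I) :
    (I ⊔ A) * (I ⊔ B) = I := by
  refine le_antisymm ?_ ?_
  · rw [sup_mul, mul_sup, mul_sup]
    exact sup_le (sup_le mul_le_left mul_le_left) (sup_le mul_le_right h)
  · calc I = I * (A ⊔ B) := by rw [hAB, mul_top]
      _ = A * I ⊔ I * B := by rw [mul_sup, mul_comm]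
      _ ≤ (I ⊔ A) * (I ⊔ B) :=
        sup_le (mul_mono le_sup_right le_sup_left) (mul_mono le_sup_left le_sup_right)

theorem span_natCast_sup_span_natCast_eq_top {m n : ℕ} (h : m.Coprime n) :
    span {(m : R)} ⊔ span {(n : R)} = ⊤ := by
  rw [← isCoprime_iff_sup_eq, isCoprime_span_singleton_iff]
  exact h.cast

end

section

variable {R : Type*} [CommRing R] [IsDomain R] {g : Ideal R → R}

theorem sq_eq_sq_of_span_singleton_eq (hR : ∀ u : Rˣ, (u : R) ^ 2 = 1) {x y : R}
    (h : span {x} = span {y}) : x ^ 2 = y ^ 2 := by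
  obtain ⟨u, rfl⟩ := span_singleton_eq_span_singleton.mp h
  rw [mul_pow, hR, mul_one]

theorem generator_top_sq (hR : ∀ u : Rˣ, (u : R) ^ 2 = 1)
    (hg : ∀ I : Ideal R, I ≠ 0 → I = span {g I}) : g ⊤ ^ 2 = 1 := by
  rw [← one_pow 2]
  exact sq_eq_sq_of_span_singleton_eq hR ((hg ⊤ top_ne_bot).symm.trans span_singleton_one.symm)

theorem generator_mul_sq (hR : ∀ u : Rˣ, (u : R) ^ 2 = 1)
    (hg : ∀ I : Ideal R, I ≠ 0 → I = span {g I}) {I J : Ideal R} (hI : I ≠ 0) (hJ : J ≠ 0) :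
    g (I * J) ^ 2 = g I ^ 2 * g J ^ 2 := by
  rw [← mul_pow]
  apply sq_eq_sq_of_span_singleton_eq hR
  rw [← span_singleton_mul_span_singleton, ← hg I hI, ← hg J hJ, ← hg _ (mul_ne_zero hI hJ)]

end

section

variable {S : Type*} [CommRing S] [IsDedekindDomain S] [Module.Free ℤ S] {m n : ℕ} {I : Ideal S}

theorem span_natCast_le_of_absNorm_eq (hI : absNorm I = m) : span {(m : S)} ≤ I :=
  hI ▸ (span_singleton_le_iff_mem _).mpr (absNorm_mem I)

theorem sup_span_natCast_mul_sup_span_natCast (hmn : m.Coprime n) (hI : absNorm I = m * n) :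
    (I ⊔ span {(m : S)}) * (I ⊔ span {(n : S)}) = I :=
  sup_mul_sup_eq_self (span_natCast_sup_span_natCast_eq_top hmn) <| by
    rw [span_singleton_mul_span_singleton, ← Nat.cast_mul]
    exact span_natCast_le_of_absNorm_eq hI

theorem mul_sup_span_natCast_eq_left (hmn : m.Coprime n) {J J' : Ideal S} (hJ : absNorm J = m)
    (hJ' : absNorm J' = n) : J * J' ⊔ span {(m : S)} = J := by
  rw [mul_sup_eq_of_coprime_right, sup_eq_left.mpr (span_natCast_le_of_absNorm_eq hJ)]
  exact top_unique ((span_natCast_sup_span_natCast_eq_top hmn.symm).ge.trans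
    (sup_le_sup_right (span_natCast_le_of_absNorm_eq hJ') _))

theorem injOn_mul_setOf_absNorm_eq (hmn : m.Coprime n) :
    Set.InjOn (fun p : Ideal S × Ideal S => p.1 * p.2)
      ({J | absNorm J = m} ×ˢ {J | absNorm J = n}) := by
  rintro ⟨J₁, J₂⟩ ⟨h₁, h₂⟩ ⟨J₁', J₂'⟩ ⟨h₁', h₂'⟩ h
  simp only at h
  refine Prod.ext ?_ ?_
  · rw [← mul_sup_span_natCast_eq_left hmn h₁ h₂, h, mul_sup_span_natCast_eq_left hmn h₁' h₂']
  · rw [← mul_sup_span_natCast_eq_left hmn.symm h₂ h₁, mul_comm, h, mul_comm,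
      mul_sup_span_natCast_eq_left hmn.symm h₂' h₁']

variable [Module.Finite ℤ S]

theorem absNorm_sup_span_natCast_dvd (hmn : m.Coprime n) (hI : absNorm I = m * n) :
    absNorm (I ⊔ span {(m : S)}) ∣ m := by
  have h₁ : absNorm (I ⊔ span {(m : S)}) ∣ m * n :=
    hI ▸ absNorm_dvd_absNorm_of_le le_sup_left
  have h₂ : absNorm (I ⊔ span {(m : S)}) ∣ m ^ Module.finrank ℤ S :=
    absNorm_span_natCast (S := S) m ▸ absNorm_dvd_absNorm_of_le le_sup_right
  exact ((hmn.pow_left _).coprime_dvd_left h₂).dvd_of_dvd_mul_right h₁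

theorem absNorm_sup_span_natCast (hmn : m.Coprime n) (hI : absNorm I = m * n) :
    absNorm (I ⊔ span {(m : S)}) = m :=
  hmn.eq_of_dvd_of_dvd_of_mul_eq (absNorm_sup_span_natCast_dvd hmn hI)
    (absNorm_sup_span_natCast_dvd hmn.symm (by rw [hI, mul_comm]))
    (by rw [← map_mul, sup_span_natCast_mul_sup_span_natCast hmn hI, hI])

theorem image_mul_setOf_absNorm_eq (hmn : m.Coprime n) :
    (fun p : Ideal S × Ideal S => p.1 * p.2) '' ({J | absNorm J = m} ×ˢ {J | absNorm J = n}) =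
      {I | absNorm I = m * n} := by
  ext I
  constructor
  · rintro ⟨⟨J, J'⟩, ⟨hJ, hJ'⟩, rfl⟩
    simp_all
  · intro hI
    exact ⟨(I ⊔ span {(m : S)}, I ⊔ span {(n : S)}),
      ⟨absNorm_sup_span_natCast hmn hI, absNorm_sup_span_natCast hmn.symm (hI.trans (mul_comm _ _))⟩,
      sup_span_natCast_mul_sup_span_natCast hmn hI⟩

end

end Ideal

theorem exists_sq_eq_neg_seven : ∃ θ : K, θ ^ 2 = -7 := by
  obtain ⟨θ, hθ⟩ := (IsSplittingField.splits K (X ^ 2 + C 7 : ℚ[X])).exists_eval_eq_zero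
    (by rw [degree_map, degree_X_pow_add_C two_pos]; norm_num)
  exact ⟨θ, by simpa [eq_neg_iff_add_eq_zero] using hθ⟩

theorem nonempty_algEquiv_quadraticAlgebra :
    Nonempty (QuadraticAlgebra ℚ (-7) 0 ≃ₐ[ℚ] K) := by
  obtain ⟨θ, hθ⟩ := exists_sq_eq_neg_seven K
  let f := QuadraticAlgebra.lift (a := (-7 : ℚ)) (b := 0) ⟨θ, by simp [← pow_two, hθ]⟩
  have hfω : f ω = θ := by simp [f]
  have hinj : Function.Injective f := by
    have : Fact (∀ r : ℚ, r ^ 2 ≠ -7 + 0 * r) := ⟨fun r => by nlinarith [sq_nonneg r]⟩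
    exact (f : QuadraticAlgebra ℚ (-7) 0 →+* K).injective
  have hsurj : Function.Surjective f := by
    rw [← AlgHom.range_eq_top, eq_top_iff,
      ← IsSplittingField.adjoin_rootSet K (X ^ 2 + C 7 : ℚ[X]), Algebra.adjoin_le_iff]
    intro y hy
    have hy : (y - θ) * (y + θ) = 0 := by
      have hy : y ^ 2 + 7 = 0 := by simpa using (mem_rootSet.mp hy).2
      linear_combination hy - hθ
    rcases mul_eq_zero.mp hy with h | h
    · exact ⟨ω, hfω.trans (eq_of_sub_eq_zero h).symm⟩
    · exact ⟨-ω, (map_neg f ω).trans (by rw [hfω]; linear_combination -h)⟩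
  exact ⟨AlgEquiv.ofBijective f ⟨hinj, hsurj⟩⟩

theorem units_sq_eq_one (u : (𝓞 K)ˣ) : (u : 𝓞 K) ^ 2 = 1 := by
  obtain ⟨e⟩ := nonempty_algEquiv_quadraticAlgebra K
  have h := QuadraticAlgebra.sq_eq_one_of_mul_eq_one
    ((RingOfIntegers.isIntegral_coe (u : 𝓞 K)).map e.symm)
    ((RingOfIntegers.isIntegral_coe ((u⁻¹ : (𝓞 K)ˣ) : 𝓞 K)).map e.symm)
    (by rw [← map_mul, ← map_mul, Units.mul_inv, map_one, map_one])
  apply RingOfIntegers.coe_injective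
  rw [map_pow, ← e.apply_symm_apply (algebraMap (𝓞 K) K u), ← map_pow, h, map_one, map_one]

/-- The function `b` is multiplicative: `b(1) = 1`, and `b(mn) = b(m)·b(n)` whenever
`m` and `n` are coprime positive integers. -/
theorem b_multiplicative (g : Ideal (RingOfIntegers K) → RingOfIntegers K)
    (hg : ∀ I : Ideal (RingOfIntegers K), I ≠ 0 → I = Ideal.span {g I}) :
    b K g 1 = 1 ∧
    ∀ m n : ℕ, 0 < m → 0 < n → Nat.Coprime m n → b K g (m * n) = b K g m * b K g n := by
  refine ⟨?_, fun m n hm hn hmn => ?_⟩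
  · have hone : {I : Ideal (𝓞 K) | Ideal.absNorm I = (1 : ℕ)} = {⊤} := by
      ext I
      simp [Ideal.absNorm_eq_one_iff]
    rw [b, hone, finsum_mem_singleton]
    exact Ideal.generator_top_sq (units_sq_eq_one K) hg
  · have hne {k : ℕ} {J : Ideal (𝓞 K)} (hk : 0 < k) (hJ : Ideal.absNorm J = k) : J ≠ 0 :=
      fun h => hk.ne' (hJ ▸ Ideal.absNorm_eq_zero_iff.mpr h)
    rw [b, ← Ideal.image_mul_setOf_absNorm_eq hmn,
      finsum_mem_image (Ideal.injOn_mul_setOf_absNorm_eq hmn), b, b,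
      ← finsum_mem_prod_mul (Ideal.finite_setOfPred_absNorm_eq m)
        (Ideal.finite_setOfPred_absNorm_eq n)]
    exact finsum_mem_congr rfl fun p ⟨hp₁, hp₂⟩ =>
      Ideal.generator_mul_sq (units_sq_eq_one K) hg (hne hm hp₁) (hne hn hp₂)
end

section
/- Let c : ℕ → ℂ be a function with c(1) = 0, and suppose there exist five pairwise coprime positive integers l, m, n, u, v with c(l)·c(m)·c(n)·c(u)·c(v) ≠ 0. Suppose c admits two decompositions c(k) = a·(M(k) − N(k)) and c(k) = a'·(M'(k) − N'(k)) for all k ≥ 1, where a, a' ∈ ℂ and M, N, M', N' : ℕ → ℂ are multiplicative arithmetic functions (each taking the value 1 at 1 and satisfying f(jk) = f(j)f(k) for coprime j, k). Then either (a = a', M = M' and N = N') or (a = −a', M = N' and N = M'). -/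
/-!
Write `S = M + N`. Multiplicativity of `M` and `N` turns `c = a (M - N)` into the relation
`2 c(jk) = S(j) c(k) + S(k) c(j)` for coprime `j, k`, in which `a` no longer appears. Subtracting
the same relation for the second decomposition, the defect `D = S - S'` satisfies
`D(j) c(k) + D(k) c(j) = 0`; three pairwise coprime points where `c` does not vanish force `D` to
vanish there, and then on every prime power. Expanding `c(jkt)` for three coprime factors gives
`a² (4 c(jkt) - …) = c(j) c(k) c(t)`, where `…` depends only on `S` and `c`, so `a² = a'²`.
Finally `M - N = ±(M' - N')` and `M + N = M' + N'` on prime powers determine `M` and `N` on prime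
powers, hence everywhere.
-/

/-- `f : ℕ → ℂ` is a multiplicative arithmetic function: `f(1) = 1` and
`f(jk) = f(j)f(k)` for coprime positive integers `j, k`. -/
def IsMultFn (f : ℕ → ℂ) : Prop :=
  f 1 = 1 ∧ ∀ j k : ℕ, 0 < j → 0 < k → Nat.Coprime j k → f (j * k) = f j * f k

namespace IsMultFn

theorem eq_of_forall_prime_pow {f g : ℕ → ℂ} (hf : IsMultFn f) (hg : IsMultFn g)
    (h : ∀ p r : ℕ, p.Prime → f (p ^ r) = g (p ^ r)) : ∀ k : ℕ, 1 ≤ k → f k = g k := by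
  intro k
  induction k using Nat.recOnPosPrimePosCoprime with
  | prime_pow p r hp _ => exact fun _ => h p r hp
  | zero => omega
  | one => exact fun _ => hf.1.trans hg.1.symm
  | coprime j k hj hk hjk ihj ihk =>
    intro _
    rw [hf.2 j k (by omega) (by omega) hjk, hg.2 j k (by omega) (by omega) hjk,
      ihj (by omega), ihk (by omega)]

theorem eq_of_sub_eq_of_add_eq_prime_pow {M N A B : ℕ → ℂ} (hM : IsMultFn M) (hN : IsMultFn N)
    (hA : IsMultFn A) (hB : IsMultFn B) (hsub : ∀ k : ℕ, 1 ≤ k → M k - N k = A k - B k)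
    (hadd : ∀ p r : ℕ, p.Prime → M (p ^ r) + N (p ^ r) = A (p ^ r) + B (p ^ r)) :
    ∀ k : ℕ, 1 ≤ k → M k = A k ∧ N k = B k := by
  have hpow : ∀ p r : ℕ, p.Prime → M (p ^ r) = A (p ^ r) ∧ N (p ^ r) = B (p ^ r) := by
    intro p r hp
    have hs := hsub (p ^ r) (Nat.one_le_iff_ne_zero.mpr (pow_ne_zero r hp.ne_zero))
    have ha := hadd p r hp
    exact ⟨by linear_combination (ha + hs) / 2, by linear_combination (ha - hs) / 2⟩
  exact fun k hk => ⟨hM.eq_of_forall_prime_pow hA (fun p r hp => (hpow p r hp).1) k hk,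
    hN.eq_of_forall_prime_pow hB (fun p r hp => (hpow p r hp).2) k hk⟩

end IsMultFn

section Decomposition

variable {c : ℕ → ℂ} {a : ℂ} {M N : ℕ → ℂ}

theorem two_mul_apply_mul_of_coprime (hM : IsMultFn M) (hN : IsMultFn N)
    (hdec : ∀ k : ℕ, 1 ≤ k → c k = a * (M k - N k)) {j k : ℕ} (hj : 0 < j) (hk : 0 < k)
    (hjk : j.Coprime k) :
    2 * c (j * k) = (M j + N j) * c k + (M k + N k) * c j := by
  rw [hdec j hj, hdec k hk, hdec (j * k) (Nat.mul_pos hj hk),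
    hM.2 j k hj hk hjk, hN.2 j k hj hk hjk]
  ring

theorem mul_mul_apply_eq_sq_mul_of_coprime (hM : IsMultFn M) (hN : IsMultFn N)
    (hdec : ∀ k : ℕ, 1 ≤ k → c k = a * (M k - N k)) {j k t : ℕ}
    (hj : 0 < j) (hk : 0 < k) (ht : 0 < t)
    (hjk : j.Coprime k) (hjt : j.Coprime t) (hkt : k.Coprime t) :
    c j * c k * c t = a ^ 2 * (4 * c (j * k * t) -
      ((M j + N j) * (M k + N k) * c t + (M j + N j) * c k * (M t + N t)
        + c j * (M k + N k) * (M t + N t))) := by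
  have hjk' : 0 < j * k := Nat.mul_pos hj hk
  have hjkt : (j * k).Coprime t := hjt.mul_left hkt
  rw [hdec j hj, hdec k hk, hdec t ht, hdec (j * k * t) (Nat.mul_pos hjk' ht),
    hM.2 (j * k) t hjk' ht hjkt, hN.2 (j * k) t hjk' ht hjkt,
    hM.2 j k hj hk hjk, hN.2 j k hj hk hjk]
  ring

variable {a' : ℂ} {A B : ℕ → ℂ}

theorem add_sub_add_mul_add_eq_zero_of_decompositions (hM : IsMultFn M) (hN : IsMultFn N)
    (hA : IsMultFn A) (hB : IsMultFn B) (hdec : ∀ k : ℕ, 1 ≤ k → c k = a * (M k - N k))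
    (hdec' : ∀ k : ℕ, 1 ≤ k → c k = a' * (A k - B k)) {j k : ℕ} (hj : 0 < j) (hk : 0 < k)
    (hjk : j.Coprime k) :
    (M j + N j - (A j + B j)) * c k + (M k + N k - (A k + B k)) * c j = 0 := by
  linear_combination two_mul_apply_mul_of_coprime hA hB hdec' hj hk hjk
    - two_mul_apply_mul_of_coprime hM hN hdec hj hk hjk

theorem sq_eq_sq_of_decompositions (hM : IsMultFn M) (hN : IsMultFn N)
    (hA : IsMultFn A) (hB : IsMultFn B) (hdec : ∀ k : ℕ, 1 ≤ k → c k = a * (M k - N k))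
    (hdec' : ∀ k : ℕ, 1 ≤ k → c k = a' * (A k - B k)) {j k t : ℕ}
    (hj : 0 < j) (hk : 0 < k) (ht : 0 < t)
    (hjk : j.Coprime k) (hjt : j.Coprime t) (hkt : k.Coprime t) (hc : c j * c k * c t ≠ 0)
    (hSj : M j + N j = A j + B j) (hSk : M k + N k = A k + B k)
    (hSt : M t + N t = A t + B t) : a ^ 2 = a' ^ 2 := by
  have h := mul_mul_apply_eq_sq_mul_of_coprime hM hN hdec hj hk ht hjk hjt hkt
  have h' := mul_mul_apply_eq_sq_mul_of_coprime hA hB hdec' hj hk ht hjk hjt hkt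
  rw [← hSj, ← hSk, ← hSt] at h'
  refine mul_right_cancel₀ (fun h0 => hc ?_) (h.symm.trans h')
  rw [h, h0, mul_zero]

end Decomposition

section Defect

variable {c D : ℕ → ℂ}
  (hD : ∀ j k : ℕ, 0 < j → 0 < k → j.Coprime k → D j * c k + D k * c j = 0)
include hD

theorem eq_zero_of_pairwise_coprime {j k t : ℕ} (hj : 0 < j) (hk : 0 < k) (ht : 0 < t)
    (hjk : j.Coprime k) (hjt : j.Coprime t) (hkt : k.Coprime t) (hck : c k ≠ 0)
    (hct : c t ≠ 0) : D j = 0 := by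
  have h : D j * (c k * c t) = 0 := by
    linear_combination (c t / 2) * hD j k hj hk hjk + (c k / 2) * hD j t hj ht hjt
      - (c j / 2) * hD k t hk ht hkt
  exact (mul_eq_zero.mp h).resolve_right (mul_ne_zero hck hct)

theorem apply_prime_pow_eq_zero {l m : ℕ} (hl : 0 < l) (hm : 0 < m) (hlm : l.Coprime m)
    (hcl : c l ≠ 0) (hcm : c m ≠ 0) (hDl : D l = 0) (hDm : D m = 0) {p : ℕ} (hp : p.Prime)
    (r : ℕ) : D (p ^ r) = 0 := by
  obtain ⟨w, hw, hpw, hcw, hDw⟩ : ∃ w, 0 < w ∧ (p ^ r).Coprime w ∧ c w ≠ 0 ∧ D w = 0 := by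
    by_cases hpl : p ∣ l
    · have hpm : ¬ p ∣ m := fun hpm => hp.not_dvd_one (hlm ▸ Nat.dvd_gcd hpl hpm)
      exact ⟨m, hm, ((hp.coprime_iff_not_dvd).mpr hpm).pow_left r, hcm, hDm⟩
    · exact ⟨l, hl, ((hp.coprime_iff_not_dvd).mpr hpl).pow_left r, hcl, hDl⟩
  have h := hD (p ^ r) w (pow_pos hp.pos r) hw hpw
  rw [hDw, zero_mul, add_zero] at h
  exact (mul_eq_zero.mp h).resolve_right hcw

end Defect

theorem unique_difference_decomposition_general (c : ℕ → ℂ)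
    (l m n u v : ℕ) (hl : 0 < l) (hm : 0 < m) (hn : 0 < n)
    (hcop : List.Pairwise Nat.Coprime [l, m, n, u, v])
    (hne : c l * c m * c n * c u * c v ≠ 0)
    (a a' : ℂ) (M N M' N' : ℕ → ℂ)
    (hM : IsMultFn M) (hN : IsMultFn N) (hM' : IsMultFn M') (hN' : IsMultFn N')
    (hdec : ∀ k : ℕ, 1 ≤ k → c k = a * (M k - N k))
    (hdec' : ∀ k : ℕ, 1 ≤ k → c k = a' * (M' k - N' k)) :
    (a = a' ∧ (∀ k : ℕ, 1 ≤ k → M k = M' k ∧ N k = N' k)) ∨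
    (a = -a' ∧ (∀ k : ℕ, 1 ≤ k → M k = N' k ∧ N k = M' k)) := by
  simp only [List.pairwise_cons, List.mem_cons, List.not_mem_nil, or_false,
    forall_eq_or_imp, forall_eq, List.Pairwise.nil] at hcop
  obtain ⟨⟨hlm, hln, -⟩, ⟨hmn, -⟩, -⟩ := hcop
  simp only [mul_ne_zero_iff] at hne
  obtain ⟨⟨⟨⟨hcl, hcm⟩, hcn⟩, -⟩, -⟩ := hne
  have ha : a ≠ 0 := left_ne_zero_of_mul (hdec l hl ▸ hcl)
  have hD := fun j k (hj : 0 < j) (hk : 0 < k) (hjk : j.Coprime k) =>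
    add_sub_add_mul_add_eq_zero_of_decompositions hM hN hM' hN' hdec hdec' hj hk hjk
  have hDl := eq_zero_of_pairwise_coprime hD hl hm hn hlm hln hmn hcm hcn
  have hDm := eq_zero_of_pairwise_coprime hD hm hl hn hlm.symm hmn hln hcl hcn
  have hDn := eq_zero_of_pairwise_coprime hD hn hl hm hln.symm hmn.symm hlm hcl hcm
  have hS : ∀ p r : ℕ, p.Prime → M (p ^ r) + N (p ^ r) = M' (p ^ r) + N' (p ^ r) :=
    fun p r hp => sub_eq_zero.mp (apply_prime_pow_eq_zero hD hl hm hlm hcl hcm hDl hDm hp r)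
  have hsq := sq_eq_sq_of_decompositions hM hN hM' hN' hdec hdec' hl hm hn hlm hln hmn
    (mul_ne_zero (mul_ne_zero hcl hcm) hcn)
    (sub_eq_zero.mp hDl) (sub_eq_zero.mp hDm) (sub_eq_zero.mp hDn)
  rcases sq_eq_sq_iff_eq_or_eq_neg.mp hsq with rfl | rfl
  · exact Or.inl ⟨rfl, hM.eq_of_sub_eq_of_add_eq_prime_pow hN hM' hN'
      (fun k hk => mul_left_cancel₀ ha ((hdec k hk).symm.trans (hdec' k hk))) hS⟩
  · refine Or.inr ⟨rfl, hM.eq_of_sub_eq_of_add_eq_prime_pow hN hN' hM'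
      (fun k hk => mul_left_cancel₀ ha ?_) fun p r hp => (hS p r hp).trans (add_comm _ _)⟩
    linear_combination (hdec' k hk) - (hdec k hk)

/-- Uniqueness of the decomposition of a Dirichlet series into a difference of two
Euler products: if `c(1) = 0`, there are five pairwise coprime positive integers on
which `c` does not vanish, and `c(k) = a(M(k) − N(k)) = a'(M'(k) − N'(k))` for all
`k ≥ 1` with `M, N, M', N'` multiplicative, then either `a = a'`, `M = M'`, `N = N'`,
or `a = −a'`, `M = N'`, `N = M'`. -/
theorem unique_difference_decomposition (c : ℕ → ℂ) (hc1 : c 1 = 0)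
    (l m n u v : ℕ) (hl : 0 < l) (hm : 0 < m) (hn : 0 < n) (hu : 0 < u) (hv : 0 < v)
    (hcop : List.Pairwise Nat.Coprime [l, m, n, u, v])
    (hne : c l * c m * c n * c u * c v ≠ 0)
    (a a' : ℂ) (M N M' N' : ℕ → ℂ)
    (hM : IsMultFn M) (hN : IsMultFn N) (hM' : IsMultFn M') (hN' : IsMultFn N')
    (hdec : ∀ k : ℕ, 1 ≤ k → c k = a * (M k - N k))
    (hdec' : ∀ k : ℕ, 1 ≤ k → c k = a' * (M' k - N' k)) :
    (a = a' ∧ (∀ k : ℕ, 1 ≤ k → M k = M' k ∧ N k = N' k)) ∨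
    (a = -a' ∧ (∀ k : ℕ, 1 ≤ k → M k = N' k ∧ N k = M' k)) :=
  unique_difference_decomposition_general c l m n u v hl hm hn hcop hne a a' M N M' N' hM hN hM' hN'
    hdec hdec'
end

section
/- The coefficient sequence c(n) of η(7τ)^7/η(τ) satisfies: c(1) = 0, and there exist five pairwise coprime positive integers l, m, n, u, v with c(l)·c(m)·c(n)·c(u)·c(v) ≠ 0 (for instance l = 3, m = 4, n = 5, u = 7, v = 11 with c(3) = 1, c(4) = 2, c(5) = 3, c(7) = 7, c(11) = 16). Hence the uniqueness lemma for difference decompositions into Euler products applies to L_{Φ_7}(s). -/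
/-!
Since `∏ (1 - Xⁿ)` has constant coefficient `1`, it is a unit, and
`F · ∏ (1 - Xⁿ) = X² · ∏ (1 - X⁷ⁿ)⁷` determines `c` recursively from the coefficients of the two
products. All but finitely many factors of such a product are `≡ 1 mod X^(d+1)`, so its
coefficients up to degree `d` are those of a finite product:
`∏ (1 - Xⁿ) = 1 - X - X² + X⁵ + X⁷ + O(X¹²)` and `∏ (1 - X⁷ⁿ)⁷ = 1 - 7X⁷ + O(X¹⁴)`.
The recursion then gives `c 0, …, c 11 = 0, 0, 1, 1, 2, 3, 5, 7, 11, 8, 15, 16`.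
-/

open PowerSeries

/-- The product topology (X-adic topology) on `ℤ⟦X⟧`. -/
noncomputable instance : TopologicalSpace (PowerSeries ℤ) :=
  inferInstanceAs (TopologicalSpace ((Unit →₀ ℕ) → ℤ))

/-- `F = X² · ∏_{n=1}^∞ (1 − X^{7n})^7 · (∏_{n=1}^∞ (1 − X^n))⁻¹`, the q-expansion of
the eta-product `η(7τ)^7/η(τ)`. -/
noncomputable def F : PowerSeries ℤ :=
  (X : PowerSeries ℤ) ^ 2 * (∏' n : ℕ+, (1 - (X : PowerSeries ℤ) ^ (7 * (n : ℕ))) ^ 7) *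
    Ring.inverse (∏' n : ℕ+, (1 - (X : PowerSeries ℤ) ^ (n : ℕ)))

/-- `c(n)`, the coefficient of `X^n` in `F`. -/
noncomputable def c (n : ℕ) : ℤ := PowerSeries.coeff (R := ℤ) n F

namespace PowerSeries

variable {R : Type*} [CommRing R]

theorem coeff_prod_eq_of_X_pow_dvd_sub_one {ι : Type*} {s t : Finset ι} (hst : s ⊆ t)
    {f : ι → R⟦X⟧} {d : ℕ} (hf : ∀ i ∈ t, i ∉ s → X ^ (d + 1) ∣ f i - 1) :
    coeff d (∏ i ∈ t, f i) = coeff d (∏ i ∈ s, f i) := by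
  let π := Ideal.Quotient.mk (Ideal.span {(X : R⟦X⟧) ^ (d + 1)})
  have hπ : π (∏ i ∈ s, f i) = π (∏ i ∈ t, f i) := by
    simp only [map_prod]
    refine Finset.prod_subset hst fun i hit his => ?_
    rw [← map_one π, Ideal.Quotient.eq, Ideal.mem_span_singleton]
    exact hf i hit his
  rw [Ideal.Quotient.eq, Ideal.mem_span_singleton, X_pow_dvd_iff] at hπ
  have hd := hπ d d.lt_succ_self
  rw [map_sub, sub_eq_zero] at hd
  exact hd.symm

theorem coeff_mul_one_sub_X_pow (A : R⟦X⟧) (d m : ℕ) :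
    coeff d (A * (1 - X ^ m)) = coeff d A - if m ≤ d then coeff (d - m) A else 0 := by
  rw [mul_sub, mul_one, map_sub, coeff_mul_X_pow']

theorem X_pow_dvd_one_sub_X_pow_pow_sub_one (m k : ℕ) :
    (X : R⟦X⟧) ^ m ∣ (1 - X ^ m) ^ k - 1 := by
  have h := sub_dvd_pow_sub_pow (1 - X ^ m : R⟦X⟧) 1 k
  rwa [one_pow, sub_sub_cancel_left, neg_dvd] at h

theorem coeff_one_sub_X_pow_pow {m k d : ℕ} (hd : d < 2 * m) :
    coeff d ((1 - X ^ m : R⟦X⟧) ^ k) = if d = 0 then 1 else if d = m then -(k : R) else 0 := by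
  induction k generalizing d with
  | zero => simp [coeff_one]
  | succ k ih =>
    rw [pow_succ, coeff_mul_one_sub_X_pow, ih hd]
    by_cases hmd : m ≤ d
    · rw [if_pos hmd, ih (by omega)]
      split_ifs <;> first | omega | (push_cast; ring)
    · rw [if_neg hmd]
      split_ifs <;> first | omega | ring

namespace WithPiTopology

open scoped PowerSeries.WithPiTopology
open Filter Topology

theorem multipliable_of_X_pow_dvd_sub_one [TopologicalSpace R] {f : ℕ+ → R⟦X⟧}
    (hf : ∀ n : ℕ+, X ^ (n : ℕ) ∣ f n - 1) : Multipliable f := by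
  have h := multipliable_one_add_of_tendsto_order_atTop_nhds_top R
    (f := fun n => f n - 1) ?_
  · simpa using h
  refine ENat.tendsto_nhds_top_iff_natCast_lt.mpr fun n =>
    eventually_atTop.mpr ⟨n.succPNat, fun m hm => ?_⟩
  have hnm : n < (m : ℕ) := Nat.succ_le_iff.mp (PNat.coe_le_coe _ _ |>.mpr hm)
  exact (Nat.cast_lt.mpr hnm).trans_le (nat_le_order _ m (X_pow_dvd_iff.mp (hf m)))

theorem coeff_tprod_eq_coeff_prod [TopologicalSpace R] [DiscreteTopology R] {ι : Type*}
    {f : ι → R⟦X⟧} (hf : Multipliable f) {d : ℕ} (s : Finset ι)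
    (hs : ∀ i ∉ s, X ^ (d + 1) ∣ f i - 1) :
    coeff d (∏' i, f i) = coeff d (∏ i ∈ s, f i) := by
  classical
  have h := (continuous_coeff R d).tendsto _ |>.comp hf.hasProd
  rw [nhds_discrete, tendsto_pure, SummationFilter.unconditional_filter, eventually_atTop] at h
  obtain ⟨t, ht⟩ := h
  rw [← ht (t ∪ s) Finset.subset_union_left, Function.comp_apply,
    coeff_prod_eq_of_X_pow_dvd_sub_one Finset.subset_union_right fun i _ his => hs i his]

end WithPiTopology

end PowerSeries

noncomputable def eulerProd : ℤ⟦X⟧ := ∏' n : ℕ+, (1 - X ^ (n : ℕ))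

noncomputable def eulerProdSevenPow : ℤ⟦X⟧ := ∏' n : ℕ+, (1 - X ^ (7 * (n : ℕ))) ^ 7

theorem coeff_eulerProd_eq_coeff_prod_range (d : ℕ) :
    coeff d eulerProd = coeff d (∏ k ∈ Finset.range d, (1 - X ^ (k + 1) : ℤ⟦X⟧)) := by
  have hdvd (n : ℕ+) : (X : ℤ⟦X⟧) ^ (n : ℕ) ∣ (1 - X ^ (n : ℕ)) - 1 := by simp
  refine (WithPiTopology.coeff_tprod_eq_coeff_prod
    (WithPiTopology.multipliable_of_X_pow_dvd_sub_one hdvd)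
    ((Finset.range d).map ⟨Nat.succPNat, Nat.succPNat_injective⟩) fun n hn => ?_).trans
    (by rw [Finset.prod_map]; rfl)
  refine (pow_dvd_pow X ?_).trans (hdvd n)
  by_contra! hnd
  have := n.natPred_add_one
  exact hn (Finset.mem_map.mpr ⟨n.natPred, Finset.mem_range.mpr (by omega), n.succPNat_natPred⟩)

theorem coeff_eulerProdSevenPow_eq_coeff_one_sub_X_pow_seven_pow {d : ℕ} (hd : d < 14) :
    coeff d eulerProdSevenPow = coeff d ((1 - X ^ 7 : ℤ⟦X⟧) ^ 7) := by
  have hdvd (n : ℕ+) : (X : ℤ⟦X⟧) ^ (7 * (n : ℕ)) ∣ (1 - X ^ (7 * (n : ℕ))) ^ 7 - 1 :=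
    X_pow_dvd_one_sub_X_pow_pow_sub_one _ 7
  refine (WithPiTopology.coeff_tprod_eq_coeff_prod
    (WithPiTopology.multipliable_of_X_pow_dvd_sub_one fun n => (pow_dvd_pow X (by omega)).trans
      (hdvd n)) {1} fun n hn => ?_).trans
    (by rw [Finset.prod_singleton]; rfl)
  have : (n : ℕ) ≠ 1 := by simpa [← PNat.coe_eq_one_iff] using hn
  have := n.pos
  exact (pow_dvd_pow X (by omega)).trans (hdvd n)

-- Euler's pentagonal number theorem: `0, 1, 2, 5, 7` are the pentagonal numbers below `12`.
theorem coeff_eulerProd {d : ℕ} (hd : d ≤ 11) :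
    coeff d eulerProd =
      if d ∈ ({0, 5, 7} : Finset ℕ) then 1 else if d ∈ ({1, 2} : Finset ℕ) then -1 else 0 := by
  rw [coeff_eulerProd_eq_coeff_prod_range]
  interval_cases d <;> simp [Finset.prod_range_succ, coeff_mul_one_sub_X_pow, coeff_one, coeff_X]

theorem coeff_eulerProdSevenPow {d : ℕ} (hd : d < 14) :
    coeff d eulerProdSevenPow = if d = 0 then 1 else if d = 7 then -7 else 0 := by
  rw [coeff_eulerProdSevenPow_eq_coeff_one_sub_X_pow_seven_pow hd]
  exact coeff_one_sub_X_pow_pow hd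

theorem constantCoeff_eulerProd : constantCoeff eulerProd = 1 := by
  simpa using coeff_eulerProd (d := 0) (by norm_num)

theorem F_mul_eulerProd : F * eulerProd = X ^ 2 * eulerProdSevenPow := by
  have hunit : IsUnit eulerProd := by simp [isUnit_iff_constantCoeff, constantCoeff_eulerProd]
  rw [F, ← eulerProd, ← eulerProdSevenPow, mul_assoc, Ring.inverse_mul_cancel _ hunit, mul_one]

theorem c_eq_sub_sum (n : ℕ) :
    c n = coeff n (X ^ 2 * eulerProdSevenPow) -
      ∑ k ∈ Finset.range n, c k * coeff (n - k) eulerProd := by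
  have h := congrArg (coeff n) F_mul_eulerProd
  rw [coeff_mul, Finset.Nat.sum_antidiagonal_eq_sum_range_succ_mk, Finset.sum_range_succ,
    Nat.sub_self, coeff_zero_eq_constantCoeff_apply, constantCoeff_eulerProd, mul_one] at h
  rw [← h]
  simp [c]

theorem coeff_X_sq_mul_eulerProdSevenPow {n : ℕ} (hn : n < 16) :
    coeff n (X ^ 2 * eulerProdSevenPow) = if n = 2 then 1 else if n = 9 then -7 else 0 := by
  rw [coeff_X_pow_mul', coeff_eulerProdSevenPow (by omega)]
  split_ifs <;> first | rfl | omega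

theorem c_eq_getD {n : ℕ} (hn : n ≤ 11) :
    c n = [0, 0, 1, 1, 2, 3, 5, 7, 11, 8, 15, 16].getD n 0 := by
  induction n using Nat.strong_induction_on with
  | _ n ih =>
    rw [c_eq_sub_sum, coeff_X_sq_mul_eulerProdSevenPow (by omega)]
    interval_cases n <;> simp [Finset.sum_range_succ, coeff_eulerProd, ih]

/-- The coefficient sequence of `η(7τ)^7/η(τ)` satisfies `c(1) = 0` and there exist
five pairwise coprime positive integers on which `c` does not vanish (for instance
`3, 4, 5, 7, 11` with `c(3) = 1`, `c(4) = 2`, `c(5) = 3`, `c(7) = 7`, `c(11) = 16`);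
hence the uniqueness lemma for difference decompositions applies to `L_{Φ_7}(s)`. -/
theorem c_satisfies_uniqueness_hypotheses :
    c 1 = 0 ∧
    (c 3 = 1 ∧ c 4 = 2 ∧ c 5 = 3 ∧ c 7 = 7 ∧ c 11 = 16) ∧
    ∃ l m n u v : ℕ, 0 < l ∧ 0 < m ∧ 0 < n ∧ 0 < u ∧ 0 < v ∧
      List.Pairwise Nat.Coprime [l, m, n, u, v] ∧
      c l * c m * c n * c u * c v ≠ 0 := by
  refine ⟨?_, ?_, 3, 4, 5, 7, 11, by norm_num, by norm_num, by norm_num, by norm_num, by norm_num,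
    by decide, ?_⟩ <;> simp [c_eq_getD]
end
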